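/- As an identity of formal power series in x and y: for every nonnegative integer r and complex parameters a, b1, c with c not a nonpositive integer, Σ_{k=0}^{r} C(r,k) · ((b1)_k/(c)_k) · x^k · Ξ1(a+k, b1+k; c+k; x, y) = Ξ1(a+r, b1; c; x, y), where Ξ1(a, b1; c; x, y) = Σ_{m,n≥0} (a)_m (b1)_m / ((c)_{m+n} m! n!) x^m y^n is a confluent form of the Lauricella series (with the parameters attached to y suppressed, i.e., all set so that only (c)_{m+n} remains in y). -/

import Mathlib

/-- The Pochhammer symbol (rising factorial) `(a)ₖ = a(a+1)⋯(a+k−1)`. -/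
noncomputable def poch (a : ℂ) (k : ℕ) : ℂ := (ascPochhammer ℂ k).eval a

/-- The confluent Lauricella series
`Ξ₁(a, b₁; c; x, y) = Σ_{m,n≥0} (a)ₘ (b₁)ₘ xᵐ yⁿ / ((c)_{m+n} m! n!)`
as a formal power series in two variables `X 0 = x`, `X 1 = y`. -/
noncomputable def xi1 (a b1 c : ℂ) : MvPowerSeries (Fin 2) ℂ :=
  fun e =>
    poch a (e 0) * poch b1 (e 0) /
      (poch c (e 0 + e 1) * ((e 0).factorial : ℂ) * ((e 1).factorial : ℂ))

lemma poch_zero (a : ℂ) : poch a 0 = 1 := by simp [poch]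

lemma poch_one (a : ℂ) : poch a 1 = a := by simp [poch]

lemma poch_succ (a : ℂ) (n : ℕ) : poch a (n + 1) = poch a n * (a + n) :=
  ascPochhammer_succ_eval n a

lemma poch_mul (a : ℂ) (n m : ℕ) : poch a n * poch (a + n) m = poch a (n + m) := by
  have h := congrArg (Polynomial.eval a) (ascPochhammer_mul (S := ℂ) n m)
  simpa [poch, Polynomial.eval_comp] using h

lemma poch_succ_left (a : ℂ) (n : ℕ) : poch a (n + 1) = a * poch (a + 1) n := by
  have h := poch_mul a 1 n
  rw [poch_one] at h
  push_cast at h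
  rw [add_comm n 1, ← h]

lemma poch_ne_zero {c : ℂ} (hc : ∀ n : ℕ, c ≠ -(n : ℂ)) (k : ℕ) : poch c k ≠ 0 := by
  induction k with
  | zero => simp [poch_zero]
  | succ n ih =>
    rw [poch_succ]
    exact mul_ne_zero ih fun h => hc n (by linear_combination h)

lemma key_sum (r : ℕ) : ∀ (a : ℂ) (m : ℕ),
    ∑ k ∈ Finset.range (r + 1),
      (r.choose k : ℂ) *
        (if k ≤ m then poch (a + k) (m - k) / ((m - k).factorial : ℂ) else 0) =
    poch (a + r) m / (m.factorial : ℂ) := by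
  induction r with
  | zero => intro a m; simp
  | succ r ih =>
    intro a m
    have e0 := Finset.sum_choose_succ_mul
      (fun i _ => (if i ≤ m then poch (a + i) (m - i) / ((m - i).factorial : ℂ) else 0)) r
    rw [show r + 1 + 1 = r + 2 by omega, e0, ih a m]
    have hfirst : ∑ i ∈ Finset.range (r + 1),
        (r.choose i : ℂ) *
          (if i + 1 ≤ m then poch (a + (i + 1 : ℕ)) (m - (i + 1)) /
            ((m - (i + 1)).factorial : ℂ) else 0)
        = if 1 ≤ m then poch (a + 1 + r) (m - 1) / ((m - 1).factorial : ℂ) else 0 := by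
      match m with
      | 0 => simp
      | m' + 1 =>
        have hco : ∀ i ∈ Finset.range (r + 1),
            (r.choose i : ℂ) *
              (if i + 1 ≤ m' + 1 then poch (a + (i + 1 : ℕ)) (m' + 1 - (i + 1)) /
                ((m' + 1 - (i + 1)).factorial : ℂ) else 0)
            = (r.choose i : ℂ) *
              (if i ≤ m' then poch ((a + 1) + i) (m' - i) /
                ((m' - i).factorial : ℂ) else 0) := by
          intro i _
          have h1 : i + 1 ≤ m' + 1 ↔ i ≤ m' := by omega
          have h2 : m' + 1 - (i + 1) = m' - i := by omega
          have h3 : a + ((i + 1 : ℕ) : ℂ) = (a + 1) + (i : ℂ) := by push_cast; ring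
          rw [h2, h3]
          simp [h1]
        rw [Finset.sum_congr rfl hco, ih (a + 1) m']
        simp
    rw [hfirst]
    -- final Pochhammer identity
    match m with
    | 0 =>
      simp only [show ¬ (1 ≤ 0) by omega, if_false, zero_add]
      norm_num [poch_zero]
    | m' + 1 =>
      simp only [show (1 : ℕ) ≤ m' + 1 by omega, if_true, Nat.add_sub_cancel]
      have e1 : poch (a + 1 + (r : ℂ)) m' = poch (a + (r : ℂ) + 1) m' := by ring_nf
      have e2 : poch (a + (r : ℂ)) (m' + 1) = (a + r) * poch (a + (r : ℂ) + 1) m' :=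
        poch_succ_left _ _
      have e3 : poch (a + ((r : ℕ) + 1 : ℕ)) (m' + 1)
          = poch (a + (r : ℂ) + 1) m' * (a + r + 1 + m') := by
        have h : a + (((r : ℕ) + 1 : ℕ) : ℂ) = (a + (r : ℂ) + 1) := by push_cast; ring
        rw [h, poch_succ]
      rw [e1, e2]
      push_cast [Nat.factorial_succ] at e3 ⊢
      rw [e3]
      have hm' : ((m'.factorial : ℂ)) ≠ 0 := Nat.cast_ne_zero.2 (Nat.factorial_ne_zero m')
      have hm'1 : ((m' : ℂ) + 1) ≠ 0 := Nat.cast_add_one_ne_zero m'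
      field_simp
      ring

lemma coeff_sum (a b1 c : ℂ) (hc : ∀ n : ℕ, c ≠ -(n : ℂ)) (r m n : ℕ) :
    ∑ k ∈ Finset.range (r + 1),
      ((r.choose k : ℂ) * poch b1 k / poch c k) *
        (if k ≤ m then
          poch (a + k) (m - k) * poch (b1 + k) (m - k) /
            (poch (c + k) ((m - k) + n) * ((m - k).factorial : ℂ) * (n.factorial : ℂ))
        else 0)
    = poch (a + r) m * poch b1 m /
        (poch c (m + n) * (m.factorial : ℂ) * (n.factorial : ℂ)) := by
  have h2 : poch c (m + n) ≠ 0 := poch_ne_zero hc _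
  have hN : ((n.factorial : ℂ)) ≠ 0 := Nat.cast_ne_zero.2 (Nat.factorial_ne_zero n)
  have hM : ((m.factorial : ℂ)) ≠ 0 := Nat.cast_ne_zero.2 (Nat.factorial_ne_zero m)
  have hterm : ∀ k ∈ Finset.range (r + 1),
      ((r.choose k : ℂ) * poch b1 k / poch c k) *
        (if k ≤ m then
          poch (a + k) (m - k) * poch (b1 + k) (m - k) /
            (poch (c + k) ((m - k) + n) * ((m - k).factorial : ℂ) * (n.factorial : ℂ))
        else 0)
      = (poch b1 m / (poch c (m + n) * (n.factorial : ℂ))) *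
          ((r.choose k : ℂ) *
            (if k ≤ m then poch (a + k) (m - k) / ((m - k).factorial : ℂ) else 0)) := by
    intro k _
    by_cases hkm : k ≤ m
    · simp only [hkm, if_true]
      have hbb : poch b1 k * poch (b1 + k) (m - k) = poch b1 m := by
        rw [poch_mul]; congr 1; omega
      have hcc : poch c k * poch (c + k) ((m - k) + n) = poch c (m + n) := by
        rw [poch_mul]; congr 1; omega
      have h1 : poch c k ≠ 0 := poch_ne_zero hc k
      have h3 : poch (c + k) ((m - k) + n) ≠ 0 := by
        intro h; rw [h, mul_zero] at hcc; exact h2 hcc.symm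
      have hF : (((m - k).factorial : ℂ)) ≠ 0 := Nat.cast_ne_zero.2 (Nat.factorial_ne_zero _)
      rw [← hbb, ← hcc]
      field_simp
    · simp [hkm]
  rw [Finset.sum_congr rfl hterm, ← Finset.mul_sum, key_sum r a m]
  field_simp

theorem finite_sum_xi1 (r : ℕ) (a b1 c : ℂ) (hc : ∀ n : ℕ, c ≠ -(n : ℂ)) :
    ∑ k ∈ Finset.range (r + 1),
      (MvPowerSeries.C : ℂ →+* MvPowerSeries (Fin 2) ℂ) ((r.choose k : ℂ) * poch b1 k / poch c k) *
        (MvPowerSeries.X 0 : MvPowerSeries (Fin 2) ℂ) ^ k *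
        xi1 (a + k) (b1 + k) (c + k) =
    xi1 (a + r) b1 c := by
  classical
  apply MvPowerSeries.ext
  intro e
  rw [map_sum]
  have hk : ∀ k ∈ Finset.range (r + 1),
      MvPowerSeries.coeff e
        ((MvPowerSeries.C : ℂ →+* MvPowerSeries (Fin 2) ℂ) ((r.choose k : ℂ) * poch b1 k / poch c k) *
          (MvPowerSeries.X 0 : MvPowerSeries (Fin 2) ℂ) ^ k *
          xi1 (a + k) (b1 + k) (c + k))
      = ((r.choose k : ℂ) * poch b1 k / poch c k) *
          (if k ≤ e 0 then
            poch (a + k) (e 0 - k) * poch (b1 + k) (e 0 - k) /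
              (poch (c + k) ((e 0 - k) + e 1) * (((e 0 - k).factorial : ℂ)) *
                ((e 1).factorial : ℂ))
          else 0) := by
    intro k _
    rw [mul_assoc, MvPowerSeries.coeff_C_mul, MvPowerSeries.X_pow_eq,
      MvPowerSeries.coeff_monomial_mul]
    by_cases hkm : k ≤ e 0
    · rw [if_pos (Finsupp.single_le_iff.mpr hkm), if_pos hkm, one_mul]
      congr 1
      have h0 : (e - Finsupp.single (0 : Fin 2) k) 0 = e 0 - k := by
        rw [Finsupp.tsub_apply, Finsupp.single_eq_same]
      have h1 : (e - Finsupp.single (0 : Fin 2) k) 1 = e 1 := by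
        rw [Finsupp.tsub_apply, Finsupp.single_eq_of_ne (by decide : (1 : Fin 2) ≠ 0),
          Nat.sub_zero]
      rw [MvPowerSeries.coeff_apply]
      simp only [xi1]
      rw [h0, h1]
    · rw [if_neg (fun h => hkm (Finsupp.single_le_iff.mp h)), if_neg hkm, mul_zero]
  rw [Finset.sum_congr rfl hk, coeff_sum a b1 c hc r (e 0) (e 1)]
  rfl
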